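/- arXiv:1408.1329 — 3 statements merged into one kernel-verified Lean document; each statement's English description precedes it below -/
import Mathlib

section
/- For integers 0 ≤ i ≤ d, the polynomial identity qbase(i, x, d)_q = Σ_{j=0}^{d} (-1)^{d-j} q^{-d(d-i) + C(d-j,2)} qbinom(d-i, d-j)_q · qbase(j, x, j)_q holds in ℚ(q)[x], where C(m,2)=m(m-1)/2. -/
open Polynomial Finset

noncomputable section

/-- The field ℚ(q) of rational functions. -/
abbrev K : Type := RatFunc ℚ

/-- The variable q of ℚ(q). -/
def qq : K := RatFunc.X

/-- The q-integer [n]_t = (t^n - 1)/(t - 1), for n ∈ ℤ. -/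
def qint (t : K) (n : ℤ) : K := (t ^ n - 1) / (t - 1)

/-- The q-factorial [n]!_t. -/
def qfact (t : K) (n : ℕ) : K := ∏ i ∈ range n, qint t (i + 1)

/-- The generalized q-binomial qbinom(m, n)_t = [m]_t [m-1]_t ⋯ [m-n+1]_t / [n]!_t. -/
def qbinom (t : K) (m : ℤ) (n : ℕ) : K := (∏ i ∈ range n, qint t (m - i)) / qfact t n

/-- The q-binomial with the vanishing convention: 0 unless 0 ≤ n ≤ m. -/
def qbinomv (t : K) (m n : ℤ) : K :=
  if 0 ≤ n ∧ n ≤ m then (∏ i ∈ range n.toNat, qint t (m - i)) / qfact t n.toNat else 0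

/-- The polynomial [n, x]_t = [n]_t + t^n x. -/
def qb (t : K) (n : ℤ) : Polynomial K := C (qint t n) + C (t ^ n) * X

/-- The polynomial qbase(m, x, n)_t = [m-n+1,x]_t ⋯ [m,x]_t / [n]!_t. -/
def qbase (t : K) (m : ℤ) (n : ℕ) : Polynomial K :=
  (∏ i ∈ range n, qb t (m - n + 1 + i)) * C (qfact t n)⁻¹

/-! Induction on `d`. Since `qbase(i, x, d + 1) = qbase(i, x, d) · [i - d, x] / [d + 1]` and
`[z, x] = q^(z-j-1) [j + 1, x] + [z - j - 1]`, multiplying the basis element `qbase(j, x, j)`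
by `[z, x]` only produces `qbase(j + 1, x, j + 1)` and `qbase(j, x, j)`. Comparing coefficients,
the induction step reduces, after cancelling signs and powers of `q`, to (with `a = d - i`,
`m = d - j`)
`[j + m + 1] qbinom(a + 1, m + 1) = q^(m+1) [j] qbinom(a, m + 1) + [a + j + 1] qbinom(a, m)`,
which follows from q-Pascal and absorption. At `i = d` the expansion is trivial because
`qbinom(0, k) = 0` for `k > 0`. -/

lemma ne_one_of_not_isOfFinOrder {M : Type*} [Monoid M] {x : M} (hx : ¬IsOfFinOrder x) : x ≠ 1 :=
  fun h => hx (h ▸ IsOfFinOrder.one)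

lemma sum_range_add_shift {M : Type*} [AddCommMonoid M] (f g : ℕ → M) (n : ℕ) (hf : f 0 = 0)
    (hg : g (n + 1) = 0) :
    ∑ j ∈ range (n + 1), (f (j + 1) + g j) = ∑ j ∈ range (n + 2), (f j + g j) := by
  rw [sum_add_distrib, sum_add_distrib, sum_range_succ' f (n + 1), sum_range_succ g (n + 1), hf,
    hg, add_zero, add_zero]

section

variable {t : K}

@[simp] lemma qint_zero (t : K) : qint t 0 = 0 := by simp [qint]

lemma qint_add (ht0 : t ≠ 0) (ht1 : t ≠ 1) (a b : ℤ) :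
    qint t (a + b) = qint t a + t ^ a * qint t b := by
  have : t - 1 ≠ 0 := sub_ne_zero.mpr ht1
  simp only [qint, zpow_add₀ ht0]
  field_simp
  ring

lemma qint_neg (ht0 : t ≠ 0) (ht1 : t ≠ 1) (a : ℤ) :
    qint t (-a) = -(t ^ (-a) * qint t a) := by
  have h := qint_add ht0 ht1 (-a) a
  rw [neg_add_cancel, qint_zero] at h
  linear_combination -h

lemma qint_natCast_ne_zero (ht : ¬IsOfFinOrder t) {n : ℕ} (hn : n ≠ 0) : qint t n ≠ 0 := by
  have htn : t ^ n ≠ 1 := fun h =>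
    ht (isOfFinOrder_iff_pow_eq_one.mpr ⟨n, Nat.pos_of_ne_zero hn, h⟩)
  rw [qint, zpow_natCast]
  exact div_ne_zero (sub_ne_zero.mpr htn) (sub_ne_zero.mpr (ne_one_of_not_isOfFinOrder ht))

lemma qfact_succ (t : K) (n : ℕ) : qfact t (n + 1) = qfact t n * qint t (n + 1) :=
  prod_range_succ _ _

lemma qfact_ne_zero (ht : ¬IsOfFinOrder t) (n : ℕ) : qfact t n ≠ 0 :=
  prod_ne_zero_iff.mpr fun i _ => by exact_mod_cast qint_natCast_ne_zero ht i.succ_ne_zero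

@[simp] lemma qbinom_zero_right (t : K) (m : ℤ) : qbinom t m 0 = 1 := by simp [qbinom, qfact]

lemma qbinom_zero_left (t : K) {n : ℕ} (hn : n ≠ 0) : qbinom t 0 n = 0 := by
  rw [qbinom, prod_eq_zero (i := 0) (by simpa using Nat.pos_of_ne_zero hn) (by simp), zero_div]

lemma prod_qint_sub_succ (t : K) (a : ℤ) (m : ℕ) :
    ∏ i ∈ range (m + 1), qint t (a + 1 - i) =
      qint t (a + 1) * ∏ i ∈ range m, qint t (a - i) := by
  rw [prod_range_succ', mul_comm]
  push_cast
  simp_rw [sub_zero, add_sub_add_right_eq_sub]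

lemma qint_mul_qbinom_succ_succ (ht : ¬IsOfFinOrder t) (a : ℤ) (m : ℕ) :
    qint t (m + 1) * qbinom t (a + 1) (m + 1) = qint t (a + 1) * qbinom t a m := by
  have h1 := qfact_ne_zero ht m
  have h2 : qint t ((m : ℤ) + 1) ≠ 0 := by exact_mod_cast qint_natCast_ne_zero ht m.succ_ne_zero
  rw [qbinom, qbinom, prod_qint_sub_succ, qfact_succ]
  field_simp

lemma qbinom_succ_succ (ht0 : t ≠ 0) (ht : ¬IsOfFinOrder t) (a : ℤ) (m : ℕ) :
    qbinom t (a + 1) (m + 1) = qbinom t a (m + 1) + t ^ (a - m) * qbinom t a m := by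
  have h1 := qfact_ne_zero ht m
  have h2 : qint t ((m : ℤ) + 1) ≠ 0 := by exact_mod_cast qint_natCast_ne_zero ht m.succ_ne_zero
  have h3 : qint t (a + 1) = qint t (a - m) + t ^ (a - m) * qint t (m + 1) := by
    rw [← qint_add ht0 (ne_one_of_not_isOfFinOrder ht)]
    ring_nf
  rw [qbinom, qbinom, qbinom, prod_qint_sub_succ, qfact_succ, prod_range_succ, h3]
  field_simp

lemma qint_add_mul_qbinom_succ_succ (ht0 : t ≠ 0) (ht : ¬IsOfFinOrder t) (a : ℤ) (j m : ℕ) :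
    qint t (j + m + 1) * qbinom t (a + 1) (m + 1) =
      t ^ ((m : ℤ) + 1) * qint t j * qbinom t a (m + 1) + qint t (a + j + 1) * qbinom t a m := by
  have ht1 := ne_one_of_not_isOfFinOrder ht
  have h1 : qint t (j + m + 1) = qint t (m + 1) + t ^ ((m : ℤ) + 1) * qint t j := by
    rw [← qint_add ht0 ht1]; ring_nf
  have h2 : qint t (a + j + 1) = qint t (a + 1) + t ^ (a + 1) * qint t j := by
    rw [← qint_add ht0 ht1]; ring_nf
  have h3 : t ^ ((m : ℤ) + 1) * t ^ (a - m) = t ^ (a + 1) := by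
    rw [← zpow_add₀ ht0]; ring_nf
  rw [h1, h2, qbinom_succ_succ ht0 ht]
  linear_combination qint_mul_qbinom_succ_succ ht a m + qint t j * qbinom t a m * h3 -
    qint t (m + 1) * qbinom_succ_succ ht0 ht a m

/-- The coefficient of the statement, extended by zero beyond `j = d` so that the recurrence
`basisCoeff_succ` also holds at `j = d + 1`. -/
def basisCoeff (t : K) (i d j : ℕ) : K :=
  if j ≤ d then
    (-1) ^ (d - j) * t ^ (-(d * (d - i) : ℤ) + ((d - j).choose 2 : ℤ)) *
      qbinom t ((d : ℤ) - i) (d - j)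
  else 0

lemma basisCoeff_of_lt {i d j : ℕ} (h : d < j) : basisCoeff t i d j = 0 :=
  if_neg (not_le.mpr h)

lemma basisCoeff_of_eq_add {i d j a m : ℕ} (ha : d = i + a) (hm : d = j + m) :
    basisCoeff t i d j = (-1) ^ m * t ^ (-(d * a : ℤ) + (m.choose 2 : ℤ)) * qbinom t a m := by
  rw [basisCoeff, if_pos (by omega), show d - j = m by omega, show (d : ℤ) - i = a by omega]

lemma basisCoeff_self (t : K) (d j : ℕ) : basisCoeff t d d j = if j = d then 1 else 0 := by
  rcases lt_trichotomy j d with h | rfl | h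
  · rw [basisCoeff_of_eq_add (a := 0) (m := d - j) (by omega) (by omega), if_neg h.ne,
      Nat.cast_zero, qbinom_zero_left t (by omega), mul_zero]
  · simp [basisCoeff_of_eq_add (t := t) (d := j) (a := 0) (m := 0) rfl rfl]
  · rw [basisCoeff_of_lt h, if_neg h.ne']

lemma basisCoeff_succ_of_le (ht0 : t ≠ 0) (ht : ¬IsOfFinOrder t) {i d j : ℕ} (hid : i ≤ d)
    (hj : j ≤ d) :
    basisCoeff t i (d + 1) j * qint t (d + 1) =
      basisCoeff t i d (j - 1) * t ^ ((i : ℤ) - d - j) * qint t j +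
        basisCoeff t i d j * qint t ((i : ℤ) - d - j - 1) := by
  obtain ⟨a, ha⟩ : ∃ a, d = i + a := ⟨d - i, by omega⟩
  obtain ⟨m, hm⟩ : ∃ m, d = j + m := ⟨d - j, by omega⟩
  have ha' : (d : ℤ) = i + a := by exact_mod_cast ha
  have hm' : (d : ℤ) = j + m := by exact_mod_cast hm
  -- at `j = 0` the truncated `j - 1` is harmless, the term carries the factor `[0] = 0`
  have hprev : basisCoeff t i d (j - 1) * qint t j = (-1) ^ (m + 1) *
      t ^ (-(d * a : ℤ) + ((m + 1).choose 2 : ℤ)) * qbinom t a (m + 1) * qint t j := by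
    rcases j with _ | j
    · simp
    · rw [Nat.add_sub_cancel, basisCoeff_of_eq_add (m := m + 1) ha (by omega)]
  have hw1 : t ^ (-(d * a : ℤ) + ((m + 1).choose 2 : ℤ)) * t ^ ((i : ℤ) - d - j) =
      t ^ (-((d + 1) * (a + 1) : ℤ) + ((m + 1).choose 2 : ℤ)) * t ^ ((m : ℤ) + 1) := by
    rw [← zpow_add₀ ht0, ← zpow_add₀ ht0]
    congr 1
    linear_combination hm' - ha'
  have hw2 : t ^ (-(d * a : ℤ) + (m.choose 2 : ℤ)) * t ^ (-((a : ℤ) + j + 1)) =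
      t ^ (-((d + 1) * (a + 1) : ℤ) + ((m + 1).choose 2 : ℤ)) := by
    rw [← zpow_add₀ ht0, Nat.choose_succ_succ', Nat.choose_one_right]
    congr 1
    push_cast
    linear_combination hm'
  rw [basisCoeff_of_eq_add (a := a + 1) (m := m + 1) (by omega) (by omega),
    basisCoeff_of_eq_add ha hm, show (i : ℤ) - d - j - 1 = -(a + j + 1) by omega,
    qint_neg ht0 (ne_one_of_not_isOfFinOrder ht), show ((d : ℤ) + 1) = j + m + 1 by omega]
  push_cast
  linear_combination (-1) ^ (m + 1) * t ^ (-((d + 1) * (a + 1) : ℤ) + ((m + 1).choose 2 : ℤ)) *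
      qint_add_mul_qbinom_succ_succ ht0 ht a j m - t ^ ((i : ℤ) - d - j) * hprev
    - (-1) ^ (m + 1) * qint t j * qbinom t a (m + 1) * hw1
    - (-1) ^ (m + 1) * qint t (a + j + 1) * qbinom t a m * hw2

lemma basisCoeff_succ (ht0 : t ≠ 0) (ht : ¬IsOfFinOrder t) {i d : ℕ} (hid : i ≤ d)
    (j : ℕ) :
    basisCoeff t i (d + 1) j * qint t (d + 1) =
      basisCoeff t i d (j - 1) * t ^ ((i : ℤ) - d - j) * qint t j +
        basisCoeff t i d j * qint t ((i : ℤ) - d - j - 1) := by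
  rcases le_or_gt j d with hj | hj
  · exact basisCoeff_succ_of_le ht0 ht hid hj
  obtain rfl | hj' := (show d + 1 ≤ j from hj).eq_or_lt
  · obtain ⟨a, ha⟩ : ∃ a, d = i + a := ⟨d - i, by omega⟩
    have ha' : (d : ℤ) = i + a := by exact_mod_cast ha
    rw [basisCoeff_of_eq_add (d := d + 1) (a := a + 1) (m := 0) (by omega) rfl, Nat.add_sub_cancel,
      basisCoeff_of_eq_add (d := d) (a := a) (m := 0) ha rfl, basisCoeff_of_lt (lt_add_one d)]
    simp only [pow_zero, one_mul, qbinom_zero_right, mul_one, zero_mul, add_zero,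
      ← zpow_add₀ ht0]
    push_cast
    congr 2
    linear_combination ha'
  · simp [basisCoeff_of_lt hj', basisCoeff_of_lt hj, basisCoeff_of_lt (by omega : d < j - 1)]

lemma qbase_succ (t : K) (m : ℤ) (n : ℕ) :
    qbase t m (n + 1) = qbase t m n * qb t (m - n) * C (qint t (n + 1))⁻¹ := by
  rw [qbase, qbase, qfact_succ, prod_range_succ', mul_inv, map_mul]
  push_cast
  ring_nf

lemma qbase_succ_succ (t : K) (m : ℤ) (n : ℕ) :
    qbase t (m + 1) (n + 1) = qbase t m n * qb t (m + 1) * C (qint t (n + 1))⁻¹ := by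
  rw [qbase, qbase, qfact_succ, prod_range_succ, mul_inv, map_mul]
  push_cast
  ring_nf

lemma qb_eq_add (ht0 : t ≠ 0) (ht1 : t ≠ 1) (z w : ℤ) :
    qb t z = C (t ^ (z - w)) * qb t w + C (qint t (z - w)) := by
  have h1 : qint t z = qint t (z - w) + t ^ (z - w) * qint t w := by
    rw [← qint_add ht0 ht1, sub_add_cancel]
  have h2 : t ^ z = t ^ (z - w) * t ^ w := by
    rw [← zpow_add₀ ht0, sub_add_cancel]
  simp only [qb, h1, h2, map_add, map_mul]
  ring

lemma qb_mul_qbase_self (ht0 : t ≠ 0) (ht : ¬IsOfFinOrder t) (z : ℤ) (j : ℕ) :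
    qb t z * qbase t j j =
      C (t ^ (z - (j + 1 : ℕ)) * qint t (j + 1 : ℕ)) * qbase t (j + 1 : ℕ) (j + 1) +
        C (qint t (z - j - 1)) * qbase t j j := by
  have hj : C (qint t (j + 1 : ℕ)) * C (qint t (j + 1 : ℕ))⁻¹ = 1 := by
    rw [← map_mul, mul_inv_cancel₀ (qint_natCast_ne_zero ht j.succ_ne_zero), map_one]
  rw [qb_eq_add ht0 (ne_one_of_not_isOfFinOrder ht) z (j + 1 : ℕ), Nat.cast_succ,
    qbase_succ_succ, map_mul]
  push_cast at hj ⊢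
  simp only [sub_add_eq_sub_sub]
  linear_combination -(C (t ^ (z - j - 1)) * qb t (j + 1) * qbase t j j) * hj

theorem qbase_eq_sum_basisCoeff (ht0 : t ≠ 0) (ht : ¬IsOfFinOrder t) {i d : ℕ}
    (hid : i ≤ d) :
    qbase t i d = ∑ j ∈ range (d + 1), C (basisCoeff t i d j) * qbase t j j := by
  induction d with
  | zero =>
    obtain rfl : i = 0 := Nat.le_zero.mp hid
    simp [basisCoeff_self]
  | succ d ih =>
    obtain rfl | hid := hid.eq_or_lt
    · simp [basisCoeff_self]
    have hd : qint t (d + 1) ≠ 0 := by exact_mod_cast qint_natCast_ne_zero ht d.succ_ne_zero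
    set F : ℕ → Polynomial K := fun k =>
      C (basisCoeff t i d (k - 1) * t ^ ((i : ℤ) - d - k) * qint t k * (qint t (d + 1))⁻¹) *
        qbase t k k
    set G : ℕ → Polynomial K := fun k =>
      C (basisCoeff t i d k * qint t ((i : ℤ) - d - k - 1) * (qint t (d + 1))⁻¹) * qbase t k k
    calc qbase t i (d + 1)
        = ∑ k ∈ range (d + 1), C (basisCoeff t i d k) * qbase t k k * qb t ((i : ℤ) - d) *
            C (qint t (d + 1))⁻¹ := by
          rw [qbase_succ, ih (Nat.le_of_lt_succ hid), sum_mul, sum_mul]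
      _ = ∑ k ∈ range (d + 1), (F (k + 1) + G k) := by
          refine sum_congr rfl fun k _ => ?_
          have h := qb_mul_qbase_self ht0 ht ((i : ℤ) - d) k
          simp only [F, G, Nat.add_sub_cancel, map_mul] at h ⊢
          linear_combination C (basisCoeff t i d k) * C (qint t (d + 1))⁻¹ * h
      _ = ∑ k ∈ range (d + 2), (F k + G k) :=
          sum_range_add_shift F G d (by simp [F]) (by simp [G, basisCoeff_of_lt])
      _ = ∑ k ∈ range (d + 1 + 1), C (basisCoeff t i (d + 1) k) * qbase t k k := by
          refine sum_congr rfl fun k _ => ?_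
          simp only [F, G, ← add_mul, ← map_add]
          congr 2
          exact ((eq_mul_inv_iff_mul_eq₀ hd).mpr
            (basisCoeff_succ ht0 ht (Nat.le_of_lt_succ hid) k)).symm

end

lemma qq_ne_zero : qq ≠ 0 := RatFunc.X_ne_zero

lemma not_isOfFinOrder_qq : ¬IsOfFinOrder qq := by
  rw [isOfFinOrder_iff_pow_eq_one]
  rintro ⟨n, hn, h⟩
  have h' : (X ^ n : ℚ[X]) = 1 := RatFunc.algebraMap_injective ℚ (by simpa [qq] using h)
  simpa [hn.ne'] using congrArg natDegree h'

theorem qbase_in_B_basis (i d : ℕ) (hid : i ≤ d) :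
    qbase qq i d = ∑ j ∈ range (d + 1),
      C ((-1) ^ (d - j) * qq ^ (-(d * (d - i) : ℤ) + ((d - j).choose 2 : ℤ)) *
        qbinom qq ((d : ℤ) - i) (d - j)) * qbase qq j j := by
  rw [qbase_eq_sum_basisCoeff qq_ne_zero not_isOfFinOrder_qq hid]
  refine sum_congr rfl fun j hj => ?_
  rw [basisCoeff, if_pos (Nat.lt_succ_iff.mp (mem_range.mp hj))]

end
end

section
/- For all integers d, r, k with 0 ≤ k ≤ d, the symmetry qbase(k, -q[r,x]_q, d)_{1/q} = (-1)^d q^{C(d+1,2)} qbase(r-1+d-k, x, d)_q holds, where the left side is obtained by substituting the polynomial -q([r]_q + q^r x) for the variable and replacing q by 1/q in all coefficients. -/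
open Polynomial Finset

noncomputable section

lemma qq_ne_one : qq ≠ 1 := by
  intro h
  have hX : (X : ℚ[X]) = 1 :=
    IsFractionRing.injective ℚ[X] K (by simpa [RatFunc.algebraMap_X, qq] using h)
  simpa [coeff_one] using congrArg (coeff · 1) hX

lemma prod_range_int_reflect {M : Type*} [CommMonoid M] (f : ℤ → M) (a : ℤ) (d : ℕ) :
    ∏ i ∈ range d, f (a - i) = ∏ i ∈ range d, f (a - d + 1 + i) := by
  rw [← prod_range_reflect]
  refine prod_congr rfl fun i hi => congrArg f ?_
  have : ((d - 1 - i : ℕ) : ℤ) = d - 1 - i := by have := mem_range.mp hi; omega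
  rw [this]
  ring

lemma qint_inv {t : K} (ht0 : t ≠ 0) (ht1 : t ≠ 1) (n : ℤ) :
    qint t⁻¹ n = t ^ (1 - n) * qint t n := by
  rw [qint, qint, inv_zpow, zpow_sub₀ ht0, zpow_one]
  field_simp
  ring

lemma qb_inv_comp {t : K} (ht0 : t ≠ 0) (ht1 : t ≠ 1) (j r : ℤ) :
    (qb t⁻¹ j).comp (-(C t) * qb t r) = -(C t) * qb t (r - j) := by
  have hconst : qint t⁻¹ j - (t ^ j)⁻¹ * (t * qint t r) = -(t * qint t (r - j)) := by
    rw [qint_inv ht0 ht1, qint, qint, qint, zpow_sub₀ ht0, zpow_sub₀ ht0, zpow_one]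
    field_simp
    ring
  have hlin : (t ^ j)⁻¹ * (t * t ^ r) = t * t ^ (r - j) := by
    rw [zpow_sub₀ ht0]; ring
  simp only [qb, add_comp, C_comp, mul_comp, X_comp, inv_zpow]
  trans C (qint t⁻¹ j - (t ^ j)⁻¹ * (t * qint t r)) - C ((t ^ j)⁻¹ * (t * t ^ r)) * X
  · simp only [map_sub, map_mul]; ring
  · rw [hconst, hlin]; simp only [map_neg, map_mul]; ring

lemma qfact_inv {t : K} (ht0 : t ≠ 0) (ht1 : t ≠ 1) (d : ℕ) :
    qfact t⁻¹ d = (t ^ d.choose 2)⁻¹ * qfact t d := by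
  have hpow : ∀ i : ℕ, t ^ (1 - ((i : ℤ) + 1)) = (t ^ i)⁻¹ := fun i => by
    rw [sub_add_cancel_right, zpow_neg, zpow_natCast]
  simp only [qfact, qint_inv ht0 ht1, hpow, prod_mul_distrib, prod_inv_distrib]
  rw [prod_pow_eq_pow_sum, sum_range_id, Nat.choose_two_right]

lemma qbase_inv_comp {t : K} (ht0 : t ≠ 0) (ht1 : t ≠ 1) (d : ℕ) (m r : ℤ) :
    (qbase t⁻¹ m d).comp (-(C t) * qb t r) =
      (-1) ^ d * C (t ^ (d + 1).choose 2) * qbase t (r - 1 + d - m) d := by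
  have hprod : ∏ i ∈ range d, qb t (r - (m - d + 1 + i)) =
      ∏ i ∈ range d, qb t (r - 1 + d - m - d + 1 + i) := by
    rw [← prod_range_int_reflect (qb t)]
    exact prod_congr rfl fun i _ => congrArg (qb t) (by ring)
  have hchoose : (d + 1).choose 2 = d + d.choose 2 := by
    rw [Nat.choose_succ_succ, Nat.choose_one_right]
  rw [qbase, qbase, mul_comp, C_comp, Polynomial.prod_comp]
  simp only [qb_inv_comp ht0 ht1]
  rw [prod_mul_distrib, prod_const, card_range, hprod, qfact_inv ht0 ht1, mul_inv, inv_inv, hchoose,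
    pow_add, neg_pow]
  simp only [map_mul, map_pow]
  ring

theorem qbase_symmetry_general (d : ℕ) (r k : ℤ) :
    (qbase qq⁻¹ k d).comp (-(C qq) * qb qq r) =
      (-1) ^ d * C (qq ^ ((d + 1).choose 2)) * qbase qq (r - 1 + d - k) d :=
  qbase_inv_comp qq_ne_zero qq_ne_one d k r

theorem qbase_symmetry (d : ℕ) (r k : ℤ) (hk : 0 ≤ k) (hkd : k ≤ d) :
    (qbase qq⁻¹ k d).comp (-(C qq) * qb qq r) =
      (-1) ^ d * C (qq ^ ((d + 1).choose 2)) * qbase qq (r - 1 + d - k) d :=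
  qbase_symmetry_general d r k

end
end

section
/- Let d ≥ 1, a = (a_1,…,a_d) ∈ ℝ^d nonzero, δ = (2 max_j |a_j|)^{-1}, and N ∈ ℕ. Then for all s = (s_1,…,s_d) ∈ ℂ^d and x ∈ [−δ, δ], Π_{j=1}^d (1 − x a_j)^{−s_j} = Σ_{ℓ=0}^N c_ℓ(s) x^ℓ + x^{N+1} ρ_N(x; s), where c_ℓ(s) = (−1)^ℓ Σ_{|α|=ℓ} a^α Π_j binom(−s_j, α_j) and ρ_N(x; s) = (−1)^{N+1}(N+1) Σ_{|α|=N+1} a^α Π_j binom(−s_j, α_j) ∫_0^1 (1−t)^N Π_j (1 − t x a_j)^{−s_j−α_j} dt; moreover for every compact K ⊂ ℂ^d there is C > 0 with |ρ_N(x; s)| ≤ C for all (s,x) ∈ K × [−δ,δ]. -/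
/-!
Put `g_α(t) = ∏ⱼ (1 - t x aⱼ)^(-sⱼ - αⱼ)`, so that `g_α(0) = 1` and
`g_α' = x ∑ₖ aₖ (sₖ + αₖ) g_{α + eₖ}`. Integrating `(1 - t)ⁿ g_α` by parts gives
`(n + 1) ∫₀¹ (1 - t)ⁿ g_α = 1 + x ∑ₖ aₖ (sₖ + αₖ) ∫₀¹ (1 - t)ⁿ⁺¹ g_{α + eₖ}`.
Weighting by `a^α ∏ⱼ binom(-sⱼ, αⱼ)` and summing over `|α| = n + 1`, the identity
`(m + 1) binom(-s, m + 1) = -(s + m) binom(-s, m)` collects the double sum into `-(n + 2)` times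
the sum over `|β| = n + 2`; this is `ρₙ = c_{n+1} + x ρ_{n+1}`. Together with
`g_0(1) = 1 + ∫₀¹ g_0'` this gives the expansion by induction on `N`.
For the bound, `|t x aⱼ| ≤ 1/2` gives `‖(1 - t x aⱼ)^w‖ ≤ 2^‖w‖`, which bounds `ρ_N(x; s)` by a
continuous function of `s` alone, hence by a constant on the compact set `K`.
-/

open Finset

/-- The generalized binomial coefficient binom(s, k) = s(s-1)⋯(s-k+1)/k!. -/
noncomputable def cbinom (s : ℂ) (k : ℕ) : ℂ := (∏ i ∈ range k, (s - i)) / (k.factorial : ℂ)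

lemma cbinom_zero (z : ℂ) : cbinom z 0 = 1 := by simp [cbinom]

lemma cbinom_succ (z : ℂ) (k : ℕ) : cbinom z (k + 1) = cbinom z k * (z - k) / (k + 1) := by
  simp only [cbinom, prod_range_succ, Nat.factorial_succ]
  push_cast
  field_simp

@[fun_prop]
lemma continuous_cbinom (k : ℕ) : Continuous fun z => cbinom z k := by
  unfold cbinom; fun_prop

section antidiagonalTuple

variable {M : Type*} [AddCommMonoid M] {d : ℕ}

lemma image_update_succ_antidiagonalTuple (k : Fin d) (n : ℕ) :
    (Nat.antidiagonalTuple d n).image (fun α => Function.update α k (α k + 1)) =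
      (Nat.antidiagonalTuple d (n + 1)).filter (fun β => β k ≠ 0) := by
  ext β
  simp only [mem_image, mem_filter, Nat.mem_antidiagonalTuple]
  constructor
  · rintro ⟨α, rfl, rfl⟩
    simp only [sum_update_of_mem (mem_univ k), Fintype.sum_eq_add_sum_compl k α,
      ← compl_eq_univ_sdiff, Function.update_self]
    omega
  · rintro ⟨hβ, hk⟩
    refine ⟨Function.update β k (β k - 1), ?_,
      by simp [Nat.sub_add_cancel (Nat.one_le_iff_ne_zero.2 hk)]⟩
    rw [Fintype.sum_eq_add_sum_compl k β] at hβ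
    rw [sum_update_of_mem (mem_univ k), ← compl_eq_univ_sdiff]
    omega

lemma sum_update_succ_antidiagonalTuple (k : Fin d) (n : ℕ) (F : (Fin d → ℕ) → M)
    (hF : ∀ β, β k = 0 → F β = 0) :
    ∑ α ∈ Nat.antidiagonalTuple d n, F (Function.update α k (α k + 1)) =
      ∑ β ∈ Nat.antidiagonalTuple d (n + 1), F β := by
  rw [← sum_filter_of_ne (p := fun β => β k ≠ 0) (fun β _ h hk => h (hF β hk)),
    ← image_update_succ_antidiagonalTuple, sum_image]
  intro α _ α' _ h
  have hk : α k = α' k := by simpa using congrFun h k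
  have h' := congrArg (Function.update · k (α k)) h
  simp only [Function.update_idem, Function.update_eq_self] at h'
  rwa [hk, Function.update_eq_self] at h'

lemma sum_antidiagonalTuple_sum_update_succ (n : ℕ) (H : (Fin d → ℕ) → M) :
    ∑ α ∈ Nat.antidiagonalTuple d n, ∑ k, (α k + 1) • H (Function.update α k (α k + 1)) =
      (n + 1) • ∑ β ∈ Nat.antidiagonalTuple d (n + 1), H β := by
  have hk (k : Fin d) := sum_update_succ_antidiagonalTuple k n (fun β => β k • H β)
    (fun β h => by simp [h])
  simp only [Function.update_self] at hk
  rw [sum_comm, sum_congr rfl fun k _ => hk k, sum_comm, smul_sum]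
  refine sum_congr rfl fun β hβ => ?_
  rw [← sum_smul, Nat.mem_antidiagonalTuple.1 hβ]

end antidiagonalTuple

noncomputable def binomWeight {d : ℕ} (b s : Fin d → ℂ) (α : Fin d → ℕ) : ℂ :=
  (∏ j, b j ^ α j) * ∏ j, cbinom (-s j) (α j)

section binomWeight

variable {d : ℕ} (b s : Fin d → ℂ)

lemma binomWeight_zero : binomWeight b s 0 = 1 := by
  simp [binomWeight, cbinom_zero]

lemma binomWeight_update_succ (α : Fin d → ℕ) (k : Fin d) :
    ((α k : ℂ) + 1) * binomWeight b s (Function.update α k (α k + 1)) =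
      -(b k * (s k + α k)) * binomWeight b s α := by
  simp only [binomWeight, ← prod_mul_distrib]
  rw [Fintype.prod_eq_mul_prod_compl k, Fintype.prod_eq_mul_prod_compl k (fun j => _ * _),
    prod_congr rfl fun j hj => by rw [Function.update_of_ne (notMem_singleton.1 (mem_compl.1 hj))]]
  simp only [Function.update_self, pow_succ, cbinom_succ]
  field_simp
  ring

lemma sum_binomWeight_mul_sum_update_succ (n : ℕ) (J : (Fin d → ℕ) → ℂ) :
    ∑ α ∈ Nat.antidiagonalTuple d n,
        binomWeight b s α * ∑ k, b k * (s k + α k) * J (Function.update α k (α k + 1)) =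
      -((n : ℂ) + 1) * ∑ β ∈ Nat.antidiagonalTuple d (n + 1), binomWeight b s β * J β := by
  have := sum_antidiagonalTuple_sum_update_succ n (fun β => binomWeight b s β * J β)
  simp only [nsmul_eq_mul] at this
  push_cast at this
  rw [neg_mul, ← this, ← sum_neg_distrib]
  refine sum_congr rfl fun α _ => ?_
  rw [mul_sum, ← sum_neg_distrib]
  refine sum_congr rfl fun k _ => ?_
  linear_combination J (Function.update α k (α k + 1)) * binomWeight_update_succ b s α k

end binomWeight

noncomputable def shiftedPowProd {d : ℕ} (a : Fin d → ℝ) (s : Fin d → ℂ) (α : Fin d → ℕ) (y : ℝ) :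
    ℂ :=
  ∏ j, ((1 - y * a j : ℝ) : ℂ) ^ (-s j - α j)

section shiftedPowProd

variable {d : ℕ} (a : Fin d → ℝ) (s : Fin d → ℂ)

lemma hasDerivAt_ofReal_one_sub_mul_cpow (c : ℝ) (w : ℂ) {y : ℝ} (hy : 0 < 1 - y * c) :
    HasDerivAt (fun y : ℝ => ((1 - y * c : ℝ) : ℂ) ^ w)
      (-(c * w * ((1 - y * c : ℝ) : ℂ) ^ (w - 1))) y := by
  have hbase : HasDerivAt (fun y : ℝ => ((1 - y * c : ℝ) : ℂ)) (-c : ℝ) y :=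
    (((hasDerivAt_id y).mul_const c).const_sub 1).ofReal_comp.congr_deriv (by simp)
  refine ((Complex.hasStrictDerivAt_cpow_const (Complex.ofReal_mem_slitPlane.2 hy)).hasDerivAt.comp
    y hbase).congr_deriv ?_
  push_cast
  ring

lemma shiftedPowProd_update_succ (α : Fin d → ℕ) (k : Fin d) (y : ℝ) :
    shiftedPowProd a s (Function.update α k (α k + 1)) y =
      ((1 - y * a k : ℝ) : ℂ) ^ (-s k - α k - 1) *
        ∏ j ∈ univ.erase k, ((1 - y * a j : ℝ) : ℂ) ^ (-s j - α j) := by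
  rw [shiftedPowProd, ← mul_prod_erase _ _ (mem_univ k),
    prod_congr rfl fun j hj => by rw [Function.update_of_ne (ne_of_mem_erase hj)],
    Function.update_self, Nat.cast_succ, sub_add_eq_sub_sub]

lemma hasDerivAt_shiftedPowProd (α : Fin d → ℕ) {y : ℝ} (hy : ∀ j, 0 < 1 - y * a j) :
    HasDerivAt (shiftedPowProd a s α)
      (∑ k, a k * (s k + α k) * shiftedPowProd a s (Function.update α k (α k + 1)) y) y := by
  refine (HasDerivAt.fun_finsetProd (u := univ) fun j _ =>
    hasDerivAt_ofReal_one_sub_mul_cpow (a j) (-s j - α j) (hy j)).congr_deriv ?_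
  refine sum_congr rfl fun k _ => ?_
  rw [shiftedPowProd_update_succ, smul_eq_mul]
  ring

end shiftedPowProd

lemma hasDerivAt_ofReal_one_sub_pow (n : ℕ) (t : ℝ) :
    HasDerivAt (fun t : ℝ => ((1 - t : ℝ) : ℂ) ^ (n + 1))
      (-((n : ℂ) + 1) * ((1 - t : ℝ) : ℂ) ^ n) t := by
  refine (((hasDerivAt_id' t).const_sub 1).ofReal_comp.fun_pow (n + 1)).congr_deriv ?_
  push_cast
  ring

lemma add_one_mul_integral_one_sub_pow_mul {u u' : ℝ → ℂ}
    (hu : ∀ t ∈ Set.Icc (0 : ℝ) 1, HasDerivAt u (u' t) t) (hu' : ContinuousOn u' (Set.Icc 0 1))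
    (n : ℕ) :
    ((n : ℂ) + 1) * ∫ t in (0 : ℝ)..1, ((1 - t : ℝ) : ℂ) ^ n * u t =
      u 0 + ∫ t in (0 : ℝ)..1, ((1 - t : ℝ) : ℂ) ^ (n + 1) * u' t := by
  have hv' : Continuous fun t : ℝ => -((n : ℂ) + 1) * ((1 - t : ℝ) : ℂ) ^ n := by fun_prop
  have hibp := intervalIntegral.integral_mul_deriv_eq_deriv_mul
    (fun t _ => hasDerivAt_ofReal_one_sub_pow n t) (by rwa [Set.uIcc_of_le zero_le_one])
    (hv'.intervalIntegrable 0 1) (hu'.intervalIntegrable_of_Icc zero_le_one)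
  simp only [neg_mul, mul_assoc, intervalIntegral.integral_neg,
    intervalIntegral.integral_const_mul] at hibp
  rw [hibp]
  simp

noncomputable def remainderIntegral {d : ℕ} (a : Fin d → ℝ) (s : Fin d → ℂ) (x : ℝ) (n : ℕ)
    (α : Fin d → ℕ) : ℂ :=
  ∫ t in (0 : ℝ)..1, ((1 - t : ℝ) : ℂ) ^ n * shiftedPowProd a s α (t * x)

section remainderIntegral

variable {d : ℕ} (a : Fin d → ℝ) (s : Fin d → ℂ) {x : ℝ}

lemma one_sub_mul_mul_pos {c t : ℝ} (hx : 0 < 1 - x * c) (ht : t ∈ Set.Icc (0 : ℝ) 1) :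
    0 < 1 - t * x * c := by
  -- `1 - t x c = (1 - t) + t (1 - x c)`
  rcases ht.1.eq_or_lt with rfl | ht0
  · simp
  · nlinarith [mul_pos ht0 hx, ht.2]

lemma hasDerivAt_shiftedPowProd_mul (hx : ∀ j, 0 < 1 - x * a j) (α : Fin d → ℕ) {t : ℝ}
    (ht : t ∈ Set.Icc (0 : ℝ) 1) :
    HasDerivAt (fun t => shiftedPowProd a s α (t * x))
      (x * ∑ k, a k * (s k + α k) * shiftedPowProd a s (Function.update α k (α k + 1)) (t * x))
      t := by
  have := (hasDerivAt_shiftedPowProd a s α fun j => (one_sub_mul_mul_pos (hx j) ht)).scomp t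
    (hasDerivAt_mul_const x)
  simpa [Function.comp_def] using this

lemma continuousOn_shiftedPowProd_mul (hx : ∀ j, 0 < 1 - x * a j) (α : Fin d → ℕ) :
    ContinuousOn (fun t => shiftedPowProd a s α (t * x)) (Set.Icc 0 1) := fun _ ht =>
  (hasDerivAt_shiftedPowProd_mul a s hx α ht).continuousAt.continuousWithinAt

lemma integral_one_sub_pow_mul_deriv_shiftedPowProd (hx : ∀ j, 0 < 1 - x * a j) (n : ℕ)
    (α : Fin d → ℕ) :
    ∫ t in (0 : ℝ)..1, ((1 - t : ℝ) : ℂ) ^ n *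
        (x * ∑ k, a k * (s k + α k) * shiftedPowProd a s (Function.update α k (α k + 1)) (t * x)) =
      x * ∑ k, a k * (s k + α k) * remainderIntegral a s x n (Function.update α k (α k + 1)) := by
  simp only [mul_sum, remainderIntegral, ← intervalIntegral.integral_const_mul]
  rw [← intervalIntegral.integral_finsetSum]
  · exact intervalIntegral.integral_congr fun t _ => sum_congr rfl fun k _ => by ring
  · intro k _
    have := continuousOn_shiftedPowProd_mul a s hx (Function.update α k (α k + 1))
    exact ContinuousOn.intervalIntegrable_of_Icc zero_le_one (by fun_prop)

lemma continuousOn_sum_shiftedPowProd_mul (hx : ∀ j, 0 < 1 - x * a j) (α : Fin d → ℕ) :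
    ContinuousOn (fun t => x * ∑ k, a k * (s k + α k) *
      shiftedPowProd a s (Function.update α k (α k + 1)) (t * x)) (Set.Icc 0 1) :=
  continuousOn_const.mul <| continuousOn_finsetSum _ fun _ _ =>
    continuousOn_const.mul (continuousOn_shiftedPowProd_mul a s hx _)

lemma shiftedPowProd_zero_right (α : Fin d → ℕ) : shiftedPowProd a s α 0 = 1 := by
  simp [shiftedPowProd]

lemma shiftedPowProd_eq_one_add (hx : ∀ j, 0 < 1 - x * a j) (α : Fin d → ℕ) :
    shiftedPowProd a s α x =
      1 + x * ∑ k, a k * (s k + α k) *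
        remainderIntegral a s x 0 (Function.update α k (α k + 1)) := by
  have hftc := intervalIntegral.integral_eq_sub_of_hasDerivAt
    (fun t ht => hasDerivAt_shiftedPowProd_mul a s hx α (Set.uIcc_of_le (zero_le_one' ℝ) ▸ ht))
    ((continuousOn_sum_shiftedPowProd_mul a s hx α).intervalIntegrable_of_Icc zero_le_one)
  rw [← integral_one_sub_pow_mul_deriv_shiftedPowProd a s hx 0 α]
  simp only [pow_zero, one_mul, hftc, zero_mul, shiftedPowProd_zero_right]
  ring

lemma add_one_mul_remainderIntegral (hx : ∀ j, 0 < 1 - x * a j) (n : ℕ) (α : Fin d → ℕ) :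
    ((n : ℂ) + 1) * remainderIntegral a s x n α =
      1 + x * ∑ k, a k * (s k + α k) *
        remainderIntegral a s x (n + 1) (Function.update α k (α k + 1)) := by
  rw [remainderIntegral, add_one_mul_integral_one_sub_pow_mul
    (fun t ht => hasDerivAt_shiftedPowProd_mul a s hx α ht)
    (continuousOn_sum_shiftedPowProd_mul a s hx α),
    integral_one_sub_pow_mul_deriv_shiftedPowProd a s hx, zero_mul, shiftedPowProd_zero_right]

end remainderIntegral

noncomputable def taylorCoeff {d : ℕ} (a : Fin d → ℝ) (ℓ : ℕ) (s : Fin d → ℂ) : ℂ :=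
  (-1) ^ ℓ * ∑ α ∈ Nat.antidiagonalTuple d ℓ, binomWeight (fun j => (a j : ℂ)) s α

noncomputable def taylorRemainder {d : ℕ} (a : Fin d → ℝ) (n : ℕ) (x : ℝ) (s : Fin d → ℂ) : ℂ :=
  (-1) ^ (n + 1) * ((n : ℂ) + 1) * ∑ α ∈ Nat.antidiagonalTuple d (n + 1),
    binomWeight (fun j => (a j : ℂ)) s α * remainderIntegral a s x n α

section taylor

variable {d : ℕ} (a : Fin d → ℝ) (s : Fin d → ℂ) {x : ℝ}

lemma prod_eq_taylorCoeff_zero_add (hx : ∀ j, 0 < 1 - x * a j) :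
    ∏ j, ((1 - x * a j : ℝ) : ℂ) ^ (-s j) = taylorCoeff a 0 s + x * taylorRemainder a 0 x s := by
  have key := sum_binomWeight_mul_sum_update_succ (fun j => (a j : ℂ)) s 0
    (remainderIntegral a s x 0)
  have h := shiftedPowProd_eq_one_add a s hx 0
  simp only [Nat.antidiagonalTuple_zero_right, sum_singleton, binomWeight_zero, one_mul,
    shiftedPowProd, Pi.zero_apply, Nat.cast_zero, sub_zero] at key h
  rw [h, key, taylorCoeff, taylorRemainder]
  simp [Nat.antidiagonalTuple_zero_right, binomWeight_zero]

lemma taylorRemainder_eq_add (hx : ∀ j, 0 < 1 - x * a j) (n : ℕ) :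
    taylorRemainder a n x s = taylorCoeff a (n + 1) s + x * taylorRemainder a (n + 1) x s := by
  have key := sum_binomWeight_mul_sum_update_succ (fun j => (a j : ℂ)) s (n + 1)
    (remainderIntegral a s x (n + 1))
  have step : ((n : ℂ) + 1) * ∑ α ∈ Nat.antidiagonalTuple d (n + 1),
        binomWeight (fun j => (a j : ℂ)) s α * remainderIntegral a s x n α =
      ∑ α ∈ Nat.antidiagonalTuple d (n + 1), binomWeight (fun j => (a j : ℂ)) s α +
        x * ∑ α ∈ Nat.antidiagonalTuple d (n + 1), binomWeight (fun j => (a j : ℂ)) s α *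
          ∑ k, a k * (s k + α k) *
            remainderIntegral a s x (n + 1) (Function.update α k (α k + 1)) := by
    simp only [mul_sum, ← sum_add_distrib]
    refine sum_congr rfl fun α _ => ?_
    rw [mul_left_comm, add_one_mul_remainderIntegral a s hx, mul_add, mul_one, mul_sum, mul_sum]
    exact congrArg _ (sum_congr rfl fun k _ => by ring)
  rw [taylorRemainder, mul_assoc, step, key, taylorCoeff, taylorRemainder]
  push_cast
  ring

lemma prod_eq_sum_taylorCoeff_add (hx : ∀ j, 0 < 1 - x * a j) (n : ℕ) :
    ∏ j, ((1 - x * a j : ℝ) : ℂ) ^ (-s j) =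
      ∑ ℓ ∈ range (n + 1), taylorCoeff a ℓ s * (x : ℂ) ^ ℓ +
        (x : ℂ) ^ (n + 1) * taylorRemainder a n x s := by
  induction n with
  | zero => simpa [mul_comm] using prod_eq_taylorCoeff_zero_add a s hx
  | succ n ih =>
    rw [ih, taylorRemainder_eq_add a s hx n, sum_range_succ _ (n + 1)]
    ring

end taylor

lemma norm_ofReal_cpow_le_two_rpow {b : ℝ} (hb₁ : 1 / 2 ≤ b) (hb₂ : b ≤ 2) (w : ℂ) :
    ‖(b : ℂ) ^ w‖ ≤ 2 ^ ‖w‖ := by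
  rw [Complex.norm_cpow_eq_rpow_re_of_pos (by linarith)]
  rcases le_total 0 w.re with h | h
  · calc b ^ w.re ≤ 2 ^ w.re := Real.rpow_le_rpow (by linarith) hb₂ h
      _ ≤ 2 ^ ‖w‖ := Real.rpow_le_rpow_of_exponent_le one_le_two (Complex.re_le_norm w)
  · calc b ^ w.re ≤ 2⁻¹ ^ w.re := Real.rpow_le_rpow_of_nonpos (by norm_num) (by linarith) h
      _ = 2 ^ (-w.re) := by rw [Real.inv_rpow zero_le_two, Real.rpow_neg zero_le_two]
      _ ≤ 2 ^ ‖w‖ := Real.rpow_le_rpow_of_exponent_le one_le_two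
        ((neg_le_abs _).trans (Complex.abs_re_le_norm w))

section bounds

variable {d : ℕ} (a : Fin d → ℝ) (s : Fin d → ℂ)

lemma norm_shiftedPowProd_le {y : ℝ} (hy : ∀ j, |y * a j| ≤ 1 / 2) (α : Fin d → ℕ) :
    ‖shiftedPowProd a s α y‖ ≤ ∏ j, (2 : ℝ) ^ ‖-s j - α j‖ := by
  rw [shiftedPowProd, norm_prod]
  gcongr with j
  have := abs_le.1 (hy j)
  exact norm_ofReal_cpow_le_two_rpow (by linarith) (by linarith) _

lemma norm_remainderIntegral_le {x : ℝ} (hx : ∀ j, |x * a j| ≤ 1 / 2) (n : ℕ) (α : Fin d → ℕ) :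
    ‖remainderIntegral a s x n α‖ ≤ ∏ j, (2 : ℝ) ^ ‖-s j - α j‖ := by
  rw [remainderIntegral]
  have hbound : ∀ t ∈ Set.uIoc (0 : ℝ) 1,
      ‖((1 - t : ℝ) : ℂ) ^ n * shiftedPowProd a s α (t * x)‖ ≤ ∏ j, (2 : ℝ) ^ ‖-s j - α j‖ := by
    intro t ht
    rw [Set.uIoc_of_le zero_le_one] at ht
    have htx : ∀ j, |t * x * a j| ≤ 1 / 2 := fun j => by
      rw [mul_assoc, abs_mul, abs_of_pos ht.1]
      exact (mul_le_of_le_one_left (abs_nonneg _) ht.2).trans (hx j)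
    rw [norm_mul, norm_pow, Complex.norm_real, Real.norm_of_nonneg (by linarith [ht.2])]
    exact (mul_le_of_le_one_left (norm_nonneg _)
      (pow_le_one₀ (by linarith [ht.2]) (by linarith [ht.1]))).trans
      (norm_shiftedPowProd_le a s htx α)
  simpa using intervalIntegral.norm_integral_le_of_norm_le_const hbound

lemma norm_taylorRemainder_le {x : ℝ} (hx : ∀ j, |x * a j| ≤ 1 / 2) (n : ℕ) :
    ‖taylorRemainder a n x s‖ ≤ (n + 1) * ∑ α ∈ Nat.antidiagonalTuple d (n + 1),
      ‖binomWeight (fun j => (a j : ℂ)) s α‖ * ∏ j, (2 : ℝ) ^ ‖-s j - α j‖ := by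
  rw [taylorRemainder, norm_mul, norm_mul, norm_pow, norm_neg, norm_one, one_pow, one_mul]
  gcongr
  · exact_mod_cast (Complex.norm_natCast (n + 1)).le
  refine (norm_sum_le _ _).trans (sum_le_sum fun α _ => ?_)
  rw [norm_mul]
  gcongr
  exact norm_remainderIntegral_le a s hx n α

end bounds

lemma exists_bound_taylorRemainder {d : ℕ} (a : Fin d → ℝ) {K : Set (Fin d → ℂ)} (hK : IsCompact K)
    (n : ℕ) :
    ∃ C, 0 < C ∧ ∀ s ∈ K, ∀ x : ℝ, (∀ j, |x * a j| ≤ 1 / 2) → ‖taylorRemainder a n x s‖ ≤ C := by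
  obtain ⟨C, hC⟩ := hK.exists_bound_of_continuousOn (f := fun s => (n + 1 : ℝ) *
    ∑ α ∈ Nat.antidiagonalTuple d (n + 1),
      ‖binomWeight (fun j => (a j : ℂ)) s α‖ * ∏ j, (2 : ℝ) ^ ‖-s j - α j‖)
    (by unfold binomWeight; fun_prop (disch := norm_num))
  refine ⟨max C 1, by positivity, fun s hs x hx => ?_⟩
  exact (norm_taylorRemainder_le a s hx n).trans
    ((Real.le_norm_self _).trans ((hC s hs).trans (le_max_left _ _)))

lemma abs_mul_le_half_of_mem_Icc {d : ℕ} {a : Fin d → ℝ} {x : ℝ}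
    (hx : x ∈ Set.Icc (-(2 * ⨆ j, |a j|)⁻¹) (2 * ⨆ j, |a j|)⁻¹) (j : Fin d) :
    |x * a j| ≤ 1 / 2 := by
  have hA : |a j| ≤ ⨆ i, |a i| := le_ciSup (Set.finite_range fun i => |a i|).bddAbove j
  rw [abs_mul]
  rcases (abs_nonneg (a j)).eq_or_lt with h | h
  · simp [← h]
  · calc |x| * |a j| ≤ (2 * ⨆ i, |a i|)⁻¹ * ⨆ i, |a i| :=
          mul_le_mul (abs_le.2 hx) hA (abs_nonneg _) (inv_nonneg.2 (by linarith))
      _ = 1 / 2 := by field_simp [(h.trans_le hA).ne']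

theorem taylor_with_remainder_general (d : ℕ) (a : Fin d → ℝ)
    (δ : ℝ) (hδ : δ = (2 * ⨆ j, |a j|)⁻¹) (N : ℕ)
    (c : ℕ → (Fin d → ℂ) → ℂ)
    (hc : ∀ (ℓ : ℕ) (s : Fin d → ℂ), c ℓ s =
      (-1) ^ ℓ * ∑ α ∈ Finset.Nat.antidiagonalTuple d ℓ,
        (∏ j, ((a j : ℂ)) ^ α j) * ∏ j, cbinom (-s j) (α j))
    (ρ : ℝ → (Fin d → ℂ) → ℂ)
    (hρ : ∀ (x : ℝ) (s : Fin d → ℂ), ρ x s =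
      (-1) ^ (N + 1) * (N + 1) * ∑ α ∈ Finset.Nat.antidiagonalTuple d (N + 1),
        ((∏ j, ((a j : ℂ)) ^ α j) * ∏ j, cbinom (-s j) (α j)) *
          ∫ t in (0 : ℝ)..1, ((1 - t : ℝ) : ℂ) ^ N *
            ∏ j, (((1 - t * x * a j : ℝ) : ℂ)) ^ (-s j - α j)) :
    (∀ (s : Fin d → ℂ) (x : ℝ), x ∈ Set.Icc (-δ) δ →
      ∏ j, (((1 - x * a j : ℝ) : ℂ)) ^ (-s j) =
        (∑ ℓ ∈ range (N + 1), c ℓ s * (x : ℂ) ^ ℓ) + (x : ℂ) ^ (N + 1) * ρ x s) ∧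
    (∀ Kc : Set (Fin d → ℂ), IsCompact Kc →
      ∃ C : ℝ, 0 < C ∧ ∀ s ∈ Kc, ∀ x ∈ Set.Icc (-δ) δ, ‖ρ x s‖ ≤ C) := by
  obtain rfl : c = taylorCoeff a := funext fun ℓ => funext (hc ℓ)
  obtain rfl : ρ = taylorRemainder a N := funext fun x => funext (hρ x)
  subst hδ
  refine ⟨fun s x hx => prod_eq_sum_taylorCoeff_add a s (fun j => ?_) N, fun K hK => ?_⟩
  · linarith [(abs_le.1 (abs_mul_le_half_of_mem_Icc hx j)).2]
  · obtain ⟨C, hC, hbound⟩ := exists_bound_taylorRemainder a hK N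
    exact ⟨C, hC, fun s hs x hx => hbound s hs x (abs_mul_le_half_of_mem_Icc hx)⟩

theorem taylor_with_remainder (d : ℕ) (hd : 1 ≤ d) (a : Fin d → ℝ) (ha : a ≠ 0)
    (δ : ℝ) (hδ : δ = (2 * ⨆ j, |a j|)⁻¹) (N : ℕ)
    (c : ℕ → (Fin d → ℂ) → ℂ)
    (hc : ∀ (ℓ : ℕ) (s : Fin d → ℂ), c ℓ s =
      (-1) ^ ℓ * ∑ α ∈ Finset.Nat.antidiagonalTuple d ℓ,
        (∏ j, ((a j : ℂ)) ^ α j) * ∏ j, cbinom (-s j) (α j))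
    (ρ : ℝ → (Fin d → ℂ) → ℂ)
    (hρ : ∀ (x : ℝ) (s : Fin d → ℂ), ρ x s =
      (-1) ^ (N + 1) * (N + 1) * ∑ α ∈ Finset.Nat.antidiagonalTuple d (N + 1),
        ((∏ j, ((a j : ℂ)) ^ α j) * ∏ j, cbinom (-s j) (α j)) *
          ∫ t in (0 : ℝ)..1, ((1 - t : ℝ) : ℂ) ^ N *
            ∏ j, (((1 - t * x * a j : ℝ) : ℂ)) ^ (-s j - α j)) :
    (∀ (s : Fin d → ℂ) (x : ℝ), x ∈ Set.Icc (-δ) δ →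
      ∏ j, (((1 - x * a j : ℝ) : ℂ)) ^ (-s j) =
        (∑ ℓ ∈ range (N + 1), c ℓ s * (x : ℂ) ^ ℓ) + (x : ℂ) ^ (N + 1) * ρ x s) ∧
    (∀ Kc : Set (Fin d → ℂ), IsCompact Kc →
      ∃ C : ℝ, 0 < C ∧ ∀ s ∈ Kc, ∀ x ∈ Set.Icc (-δ) δ, ‖ρ x s‖ ≤ C) :=
  taylor_with_remainder_general d a δ hδ N c hc ρ hρ
end
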